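/- arXiv:1908.09103 — 2 statements merged into one kernel-verified Lean document; each statement's English description precedes it below -/
import Mathlib

section
/- Let Θ = [−1,1]² ⊂ ℝ², g₁(θ) = θ₁²(θ₂ + θ₁²), g₂(θ) = θ₂ (two inequality constraints, no equalities), Θ_I = {θ ∈ Θ : g₁(θ) ≤ 0, g₂(θ) ≤ 0}, and p = (0,1). Then: (a) S(p,Θ_I) = {(0,0)}; (b) the Abadie constraint qualification holds at (0,0): T((0,0)) = L((0,0)) = {t ∈ ℝ² : t₂ ≤ 0}; but (c) Assumption 3' fails at (0,0): for every η > 0 and C > 0 there exists θ ∈ Θ with ‖θ‖ ≤ η such that Q(θ) < C·d(θ,Θ_I), where d(θ,Θ_I) = inf{‖θ−a‖ : a ∈ Θ_I}. -/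
/-!
The identified set is the part of the box below the parabola `θ₁ = -θ₀²`, together with the
segment `{0} × [-1, 0]`. The curves `s ↦ (s t₀, s t₁ - s² t₀²)` stay below the parabola, so every
direction of the lower half-plane, the horizontal ones included, is tangent at the origin; and
since `∇g₁(0) = 0`, the linearized cone is that half-plane too. Along `(ε, 0)`, however, the
criterion is `ε⁴` while the distance to the identified set is of order `ε²`.
-/

open Filter Topology Metric RealInnerProductSpace

noncomputable section

/-- Two-dimensional Euclidean parameter space. -/
abbrev E2 := EuclideanSpace ℝ (Fin 2)

/-- The parameter space `Θ = [-1,1]²`. -/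
def Box : Set E2 := {θ | θ 0 ∈ Set.Icc (-1:ℝ) 1 ∧ θ 1 ∈ Set.Icc (-1:ℝ) 1}

/-- The direction of projection `p = (0,1)`. -/
def pvec : E2 := EuclideanSpace.single 1 1

/-- The support set `S(p, Θ_I)`: maximizers of `θ ↦ ⟪p, θ⟫` over `Θ_I`. -/
def suppSet (ΘI : Set E2) (p : E2) : Set E2 :=
  {θ ∈ ΘI | ∀ θ' ∈ ΘI, ⟪p, θ'⟫ ≤ ⟪p, θ⟫}

/-- The tangent cone `T(θ*)` to `Θ_I` at `θ*`. -/
def tcone (ΘI : Set E2) (θs : E2) : Set E2 :=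
  insert 0 {t | ∃ u : ℕ → E2,
    (∀ n, u n ∈ ΘI ∧ u n ≠ θs) ∧ Tendsto u atTop (𝓝 θs) ∧
    Tendsto (fun n => ‖u n - θs‖⁻¹ • (u n - θs)) atTop (𝓝 (‖t‖⁻¹ • t))}

/-- The linearized cone `L(θ*)` (all constraints are inequality constraints). -/
def lcone {J : ℕ} (g : Fin J → E2 → ℝ) (θs : E2) : Set E2 :=
  {t | ∀ j, g j θs = 0 → ⟪gradient (g j) θs, t⟫ ≤ 0}

/-- The criterion `Q(θ) = max{0, max_j g_j(θ)}` (all constraints are inequalities). -/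
def Qcrit {J : ℕ} (g : Fin J → E2 → ℝ) (θ : E2) : ℝ :=
  max 0 (⨆ j, g j θ)

/-- The two constraints `g₁(θ) = θ₁²(θ₂ + θ₁²)` and `g₂(θ) = θ₂`. -/
def gEx16 : Fin 2 → E2 → ℝ :=
  ![fun θ => (θ 0) ^ 2 * (θ 1 + (θ 0) ^ 2), fun θ => θ 1]

/-- The identified set of the third counterexample. -/
def idSetEx16 : Set E2 := {θ ∈ Box | ∀ j, gEx16 j θ ≤ 0}

lemma mem_idSetEx16_iff {θ : E2} :
    θ ∈ idSetEx16 ↔ θ ∈ Box ∧ θ 0 ^ 2 * (θ 1 + θ 0 ^ 2) ≤ 0 ∧ θ 1 ≤ 0 := by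
  rw [idSetEx16, Set.mem_sep_iff, Fin.forall_fin_two]
  rfl

lemma zero_mem_idSetEx16 : (0 : E2) ∈ idSetEx16 := by
  simp [mem_idSetEx16_iff, Box]

lemma box_mem_nhds_zero : Box ∈ 𝓝 (0 : E2) := by
  refine mem_of_superset (ball_mem_nhds 0 one_pos) fun x hx => ?_
  rw [mem_ball_zero_iff] at hx
  exact ⟨abs_le.1 ((PiLp.norm_apply_le x 0).trans hx.le),
    abs_le.1 ((PiLp.norm_apply_le x 1).trans hx.le)⟩

lemma inner_pvec (v : E2) : ⟪pvec, v⟫ = v 1 := by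
  simp [pvec, EuclideanSpace.inner_single_left]

lemma suppSet_idSetEx16 : suppSet idSetEx16 pvec = {0} := by
  ext θ
  simp only [suppSet, inner_pvec, Set.mem_singleton_iff]
  constructor
  · rintro ⟨hθ, hmax⟩
    obtain ⟨-, hg₁, hg₂⟩ := mem_idSetEx16_iff.1 hθ
    have hθ1 : θ 1 = 0 := le_antisymm hg₂ (by simpa using hmax 0 zero_mem_idSetEx16)
    have hθ0 : θ 0 = 0 := by
      rw [hθ1, zero_add] at hg₁
      exact pow_eq_zero_iff two_ne_zero |>.1
        (mul_self_eq_zero.1 (le_antisymm hg₁ (mul_self_nonneg _)))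
    ext i
    fin_cases i <;> simpa
  · rintro rfl
    exact ⟨zero_mem_idSetEx16, fun θ' hθ' => by simpa using (mem_idSetEx16_iff.1 hθ').2.2⟩

lemma gradient_gEx16_zero : gradient (gEx16 0) 0 = 0 := by
  apply HasGradientAt.gradient
  rw [hasGradientAt_iff_hasFDerivAt, map_zero]
  have hsq : HasFDerivAt (fun θ : E2 => θ 0 ^ 2) (0 : E2 →L[ℝ] ℝ) 0 := by
    simpa using ((EuclideanSpace.proj (0 : Fin 2) : E2 →L[ℝ] ℝ).hasFDerivAt (x := 0)).pow 2
  have h := hsq.fun_mul ((EuclideanSpace.proj (1 : Fin 2) : E2 →L[ℝ] ℝ).hasFDerivAt.fun_add hsq)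
  simp only [Fin.isValue, PiLp.proj_apply, PiLp.zero_apply, ne_eq, OfNat.ofNat_ne_zero,
    not_false_eq_true, zero_pow, add_zero, zero_smul, smul_zero] at h
  exact h

lemma gradient_gEx16_one (θ : E2) : gradient (gEx16 1) θ = EuclideanSpace.single 1 1 := by
  apply HasGradientAt.gradient
  rw [hasGradientAt_iff_hasFDerivAt]
  have hdual : InnerProductSpace.toDual ℝ E2 (EuclideanSpace.single 1 1) =
      EuclideanSpace.proj (1 : Fin 2) := by
    ext v
    simp [EuclideanSpace.inner_single_left]
  rw [hdual]
  exact (EuclideanSpace.proj (1 : Fin 2) : E2 →L[ℝ] ℝ).hasFDerivAt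

lemma lcone_gEx16 : lcone gEx16 0 = {t : E2 | t 1 ≤ 0} := by
  ext t
  simp only [lcone, Fin.forall_fin_two, gradient_gEx16_zero, gradient_gEx16_one,
    EuclideanSpace.inner_single_left]
  simp [gEx16]

lemma tcone_zero_subset_of_subset {S K : Set E2} (hK : IsClosed K) (hK0 : (0 : E2) ∈ K)
    (hKsmul : ∀ c : ℝ, 0 ≤ c → ∀ x ∈ K, c • x ∈ K) (hSK : S ⊆ K) : tcone S 0 ⊆ K := by
  rintro t (rfl | ⟨u, hu, -, hlim⟩)
  · exact hK0
  have hunit : ‖t‖⁻¹ • t ∈ K := hK.mem_of_tendsto hlim <| Eventually.of_forall fun n =>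
    hKsmul _ (inv_nonneg.2 (norm_nonneg _)) _ (by simpa using hSK (hu n).1)
  rcases eq_or_ne t 0 with rfl | ht
  · exact hK0
  simpa [smul_smul, ht] using hKsmul ‖t‖ (norm_nonneg t) _ hunit

lemma inv_norm_smul_smul_of_pos {c : ℝ} (hc : 0 < c) (w : E2) :
    ‖c • w‖⁻¹ • (c • w) = ‖w‖⁻¹ • w := by
  rcases eq_or_ne w 0 with rfl | hw
  · simp
  rw [norm_smul, Real.norm_of_nonneg hc.le, smul_smul, mul_inv, mul_comm c⁻¹, mul_assoc,
    inv_mul_cancel₀ hc.ne', mul_one]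

lemma mem_tcone_zero_of_tendsto {S : Set E2} {t : E2} (ht : t ≠ 0) {c : ℕ → ℝ} {w : ℕ → E2}
    (hc_pos : ∀ᶠ n in atTop, 0 < c n) (hc : Tendsto c atTop (𝓝 0))
    (hw : Tendsto w atTop (𝓝 t)) (hS : ∀ᶠ n in atTop, c n • w n ∈ S) : t ∈ tcone S 0 := by
  obtain ⟨N, hN⟩ := eventually_atTop.1 (hc_pos.and (hS.and (hw.eventually_ne ht)))
  have hshift := tendsto_add_atTop_nat N
  have hcw : Tendsto (fun n => c n • w n) atTop (𝓝 0) := by simpa using hc.smul hw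
  refine Or.inr ⟨fun n => c (n + N) • w (n + N), fun n => ?_, ?_, ?_⟩
  · obtain ⟨hcn, hSn, hwn⟩ := hN (n + N) (Nat.le_add_left N n)
    exact ⟨hSn, smul_ne_zero hcn.ne' hwn⟩
  · exact hcw.comp hshift
  · have hnormalize : ContinuousAt (fun v : E2 => ‖v‖⁻¹ • v) t :=
      (continuous_norm.continuousAt.inv₀ (norm_ne_zero_iff.2 ht)).smul continuousAt_id
    refine ((hnormalize.tendsto.comp hw).comp hshift).congr fun n => ?_
    simp [inv_norm_smul_smul_of_pos (hN (n + N) (Nat.le_add_left N n)).1]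

lemma tcone_idSetEx16 : tcone idSetEx16 0 = {t : E2 | t 1 ≤ 0} := by
  have hK : IsClosed {t : E2 | t 1 ≤ 0} := isClosed_le (by fun_prop) continuous_const
  refine (tcone_zero_subset_of_subset hK (by simp) (fun c hc x hx => ?_)
    (fun θ hθ => (mem_idSetEx16_iff.1 hθ).2.2)).antisymm fun t ht => ?_
  · simpa using mul_nonpos_of_nonneg_of_nonpos hc hx
  rcases eq_or_ne t 0 with rfl | ht0
  · exact Or.inl rfl
  set c : ℕ → ℝ := fun n => 1 / (n + 1)
  set w : ℕ → E2 := fun n => t - (c n * t 0 ^ 2) • EuclideanSpace.single 1 1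
  have hc : Tendsto c atTop (𝓝 0) := tendsto_one_div_add_atTop_nhds_zero_nat
  have hw : Tendsto w atTop (𝓝 t) := by
    simpa using tendsto_const_nhds.sub ((hc.mul_const (t 0 ^ 2)).smul_const
      (EuclideanSpace.single (1 : Fin 2) (1 : ℝ)))
  have hcw : Tendsto (fun n => c n • w n) atTop (𝓝 0) := by simpa using hc.smul hw
  have hbox : ∀ᶠ n in atTop, c n • w n ∈ Box := hcw.eventually box_mem_nhds_zero
  have hcoord (n : ℕ) :
      (c n • w n) 0 = c n * t 0 ∧ (c n • w n) 1 = c n * t 1 - (c n * t 0) ^ 2 := by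
    simp [w]
    ring
  have hct (n : ℕ) : c n * t 1 ≤ 0 := mul_nonpos_of_nonneg_of_nonpos (by positivity) ht
  refine mem_tcone_zero_of_tendsto ht0 (Eventually.of_forall fun n => by positivity) hc hw
    (hbox.mono fun n hn => mem_idSetEx16_iff.2 ⟨hn, ?_, ?_⟩)
  · rw [(hcoord n).1, (hcoord n).2, sub_add_cancel]
    exact mul_nonpos_of_nonneg_of_nonpos (sq_nonneg _) (hct n)
  · rw [(hcoord n).2]
    linarith [hct n, sq_nonneg (c n * t 0)]

lemma Qcrit_le {J : ℕ} {g : Fin J → E2 → ℝ} {θ : E2} {b : ℝ} (hb : 0 ≤ b)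
    (hg : ∀ j, g j θ ≤ b) : Qcrit g θ ≤ b :=
  max_le hb (Real.iSup_le hg hb)

/-- Points of the identified set near `(ε, 0)` must either move `ε / 2` horizontally or, having
`θ₀ > ε / 2`, drop below `θ₁ = -θ₀² < -ε² / 4`. -/
lemma sq_div_four_le_infDist_idSetEx16 {ε : ℝ} (hε0 : 0 ≤ ε) (hε2 : ε ≤ 2) :
    ε ^ 2 / 4 ≤ infDist (EuclideanSpace.single 0 ε) idSetEx16 := by
  rw [le_infDist ⟨0, zero_mem_idSetEx16⟩]
  intro a ha
  obtain ⟨-, hg₁, hg₂⟩ := mem_idSetEx16_iff.1 ha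
  by_cases ha0 : a 0 ≤ ε / 2
  · calc ε ^ 2 / 4 ≤ |ε - a 0| := by rw [abs_of_nonneg (by linarith)]; nlinarith
      _ ≤ _ := by simpa [Real.dist_eq] using PiLp.dist_apply_le (EuclideanSpace.single 0 ε) a 0
  · have hsq : ε ^ 2 / 4 < a 0 ^ 2 := by nlinarith
    have hbelow : a 1 + a 0 ^ 2 ≤ 0 :=
      nonpos_of_mul_nonpos_right hg₁ ((div_nonneg (sq_nonneg ε) zero_le_four).trans_lt hsq)
    calc ε ^ 2 / 4 ≤ |0 - a 1| := by rw [zero_sub, abs_neg, abs_of_nonpos hg₂]; linarith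
      _ ≤ _ := by simpa [Real.dist_eq] using PiLp.dist_apply_le (EuclideanSpace.single 0 ε) a 1

lemma exists_Qcrit_lt_mul_infDist_idSetEx16 {η C : ℝ} (hη : 0 < η) (hC : 0 < C) :
    ∃ θ ∈ Box, ‖θ‖ ≤ η ∧ Qcrit gEx16 θ < C * infDist θ idSetEx16 := by
  set ε := min η (min 1 (C / 8))
  have hε : 0 < ε := lt_min hη (lt_min one_pos (by positivity))
  have hε1 : ε ≤ 1 := (min_le_right _ _).trans (min_le_left _ _)
  have hεC : ε ≤ C / 8 := (min_le_right _ _).trans (min_le_right _ _)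
  refine ⟨EuclideanSpace.single 0 ε, ?_, ?_, ?_⟩
  · simp [Box, hε1, (by linarith : -1 ≤ ε)]
  · rw [PiLp.norm_single, Real.norm_of_nonneg hε.le]
    exact min_le_left _ _
  calc Qcrit gEx16 (EuclideanSpace.single 0 ε) ≤ ε ^ 4 :=
        Qcrit_le (by positivity) (by simp [Fin.forall_fin_two, gEx16, ← pow_add]; positivity)
    _ < C * (ε ^ 2 / 4) := by nlinarith [pow_pos hε 2, pow_pos hε 3]
    _ ≤ C * infDist _ idSetEx16 := by
        gcongr
        exact sq_div_four_le_infDist_idSetEx16 hε.le (by linarith)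

/-- Third counterexample: the support set in direction `p = (0,1)` is `{(0,0)}`, ACQ
holds at `(0,0)` (tangent and linearized cones agree and equal the lower half plane),
yet Assumption 3′ fails at `(0,0)`. -/
theorem example16_ACQ_without_assumption3' :
    suppSet idSetEx16 pvec = {0} ∧
    tcone idSetEx16 0 = {t : E2 | t 1 ≤ 0} ∧
    lcone gEx16 0 = {t : E2 | t 1 ≤ 0} ∧
    (∀ η > (0:ℝ), ∀ C > (0:ℝ), ∃ θ ∈ Box, ‖θ‖ ≤ η ∧
      Qcrit gEx16 θ < C * infDist θ idSetEx16) :=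
  ⟨suppSet_idSetEx16, tcone_idSetEx16, lcone_gEx16,
    fun _ hη _ hC => exists_Qcrit_lt_mul_infDist_idSetEx16 hη hC⟩
end
end

section
/- Let Θ = [−1,1]² ⊂ ℝ², g₁(θ) = −θ₁ + θ₂, g₂(θ) = θ₁ + θ₂, g₃(θ) = (θ₁θ₂)² (three inequality constraints, no equalities), Θ_I = {θ ∈ Θ : g_j(θ) ≤ 0, j = 1,2,3}, and p = (0,1). Then: (a) Θ_I = {(0,s) : −1 ≤ s ≤ 0} and S(p,Θ_I) = {(0,0)}; (b) the linearized cone at (0,0) is L((0,0)) = {t ∈ ℝ² : t₂ ≤ −|t₁|}; (c) the tangent cone at (0,0) is T((0,0)) = {(0,s) : s ≤ 0}; (d) Assumption 7' holds at (0,0), with p·t ≤ −(1/√2)·‖t‖ for all t ∈ L((0,0)); and (e) the Abadie constraint qualification fails at (0,0), since L((0,0)) ≠ T((0,0)). -/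
open Filter Topology Metric RealInnerProductSpace

noncomputable section

/-- The three constraints `g₁(θ) = -θ₁ + θ₂`, `g₂(θ) = θ₁ + θ₂`, `g₃(θ) = (θ₁θ₂)²`. -/
def gEx17 : Fin 3 → E2 → ℝ :=
  ![fun θ => -θ 0 + θ 1, fun θ => θ 0 + θ 1, fun θ => (θ 0 * θ 1) ^ 2]

/-- The identified set of the fourth counterexample. -/
def idSetEx17 : Set E2 := {θ ∈ Box | ∀ j, gEx17 j θ ≤ 0}

/-! ### Auxiliary lemmas -/

lemma grad_inner_aux (v x : E2) : HasGradientAt (fun θ => ⟪v, θ⟫) v x := by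
  rw [hasGradientAt_iff_hasFDerivAt]
  have he : (fun θ : E2 => ⟪v, θ⟫) = ⇑(InnerProductSpace.toDual ℝ E2 v) := by
    ext θ; simp
  rw [he]
  exact (InnerProductSpace.toDual ℝ E2 v).hasFDerivAt

lemma grad_g0 (x : E2) : gradient (gEx17 0) x
    = EuclideanSpace.single 0 (-1) + EuclideanSpace.single 1 1 := by
  have h := grad_inner_aux (EuclideanSpace.single 0 (-1) + EuclideanSpace.single 1 1) x
  have he : (fun θ : E2 =>
      ⟪(EuclideanSpace.single 0 (-1) + EuclideanSpace.single 1 1 : E2), θ⟫) = gEx17 0 := by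
    ext θ
    simp [gEx17, inner_add_left, EuclideanSpace.inner_single_left]
  rw [he] at h
  exact h.gradient

lemma grad_g1 (x : E2) : gradient (gEx17 1) x
    = EuclideanSpace.single 0 1 + EuclideanSpace.single 1 1 := by
  have h := grad_inner_aux (EuclideanSpace.single 0 1 + EuclideanSpace.single 1 1) x
  have he : (fun θ : E2 =>
      ⟪(EuclideanSpace.single 0 1 + EuclideanSpace.single 1 1 : E2), θ⟫) = gEx17 1 := by
    ext θ
    simp [gEx17, inner_add_left, EuclideanSpace.inner_single_left]
  rw [he] at h
  exact h.gradient

lemma grad_g2 : gradient (gEx17 2) 0 = 0 := by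
  have h : HasGradientAt (gEx17 2) 0 0 := by
    rw [hasGradientAt_iff_hasFDerivAt]
    have hp : ∀ i : Fin 2, HasFDerivAt (fun θ : E2 => θ i)
        (EuclideanSpace.proj i : E2 →L[ℝ] ℝ) 0 := by
      intro i
      have : (fun θ : E2 => θ i) = ⇑(EuclideanSpace.proj i : E2 →L[ℝ] ℝ) := by ext θ; simp
      rw [this]; exact ContinuousLinearMap.hasFDerivAt _
    have hm := (hp 0).mul (hp 1)
    have h := hm.mul hm
    have he : gEx17 2 = fun θ : E2 => (θ 0 * θ 1) * (θ 0 * θ 1) := by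
      ext θ; simp [gEx17]; ring
    rw [he]
    convert h using 1
    all_goals (ext t; simp)
  exact h.gradient

lemma idset_eq : idSetEx17 = {θ : E2 | θ 0 = 0 ∧ -1 ≤ θ 1 ∧ θ 1 ≤ 0} := by
  ext θ
  constructor
  · rintro ⟨hbox, hg⟩
    have h0 := hg 0
    have h1 := hg 1
    have h2 := hg 2
    simp only [gEx17, Matrix.cons_val_zero, Matrix.cons_val_one, Matrix.head_cons,
      Matrix.cons_val_two, Matrix.tail_cons] at h0 h1 h2
    have hz : θ 0 * θ 1 = 0 := by nlinarith [sq_nonneg (θ 0 * θ 1)]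
    have hθ0 : θ 0 = 0 := by
      rcases mul_eq_zero.mp hz with h | h
      · exact h
      · nlinarith
    refine ⟨hθ0, hbox.2.1, by linarith⟩
  · rintro ⟨h0, h1l, h1u⟩
    refine ⟨⟨by rw [h0]; norm_num, ⟨h1l, by linarith⟩⟩, ?_⟩
    intro j
    fin_cases j <;> simp [gEx17, h0] <;> linarith

lemma ext2 (x y : E2) (h0 : x 0 = y 0) (h1 : x 1 = y 1) : x = y := by
  apply PiLp.ext; intro i
  fin_cases i <;> assumption

lemma supp_eq : suppSet idSetEx17 pvec = {0} := by
  have hz : (0 : E2) ∈ idSetEx17 := by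
    rw [idset_eq]; simp
  ext θ
  simp only [suppSet, Set.mem_setOf_eq, Set.mem_singleton_iff, pvec,
    EuclideanSpace.inner_single_left, map_one, one_mul]
  constructor
  · rintro ⟨hθ, hmax⟩
    have h1 := hmax 0 hz
    rw [idset_eq] at hθ
    simp only [Set.mem_setOf_eq] at hθ
    simp only [show (0:E2) 1 = 0 from rfl] at h1
    exact ext2 θ 0 hθ.1 (le_antisymm hθ.2.2 h1)
  · rintro rfl
    refine ⟨hz, ?_⟩
    intro θ' hθ'
    rw [idset_eq] at hθ'
    simp only [Set.mem_setOf_eq] at hθ'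
    simpa using hθ'.2.2

lemma lcone_eq : lcone gEx17 0 = {t : E2 | t 1 ≤ -|t 0|} := by
  have hg0 : gEx17 0 (0 : E2) = 0 := by simp [gEx17]
  have hg1 : gEx17 1 (0 : E2) = 0 := by simp [gEx17]
  ext t
  simp only [lcone, Set.mem_setOf_eq]
  constructor
  · intro h
    have h0 := h 0 hg0
    have h1 := h 1 hg1
    rw [grad_g0] at h0
    rw [grad_g1] at h1
    simp only [inner_add_left, EuclideanSpace.inner_single_left, map_one, one_mul,
      map_neg, neg_mul, RCLike.star_def, map_one] at h0 h1
    rcases abs_cases (t 0) with ⟨ha, _⟩ | ⟨ha, _⟩ <;> rw [ha] <;> linarith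
  · intro h j hj
    have ha1 : t 0 ≤ |t 0| := le_abs_self _
    have ha2 : -|t 0| ≤ t 0 := neg_abs_le _
    have hj3 : j = 0 ∨ j = 1 ∨ j = 2 := by omega
    rcases hj3 with rfl | rfl | rfl
    · rw [grad_g0]
      simp only [inner_add_left, EuclideanSpace.inner_single_left, map_one, one_mul,
        map_neg, neg_mul]
      linarith
    · rw [grad_g1]
      simp only [inner_add_left, EuclideanSpace.inner_single_left, map_one, one_mul]
      linarith
    · rw [grad_g2, inner_zero_left]

lemma tcone_eq : tcone idSetEx17 0 = {t : E2 | t 0 = 0 ∧ t 1 ≤ 0} := by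
  ext t
  constructor
  · rintro (rfl | ⟨u, hmem, hlim, hdir⟩)
    · exact ⟨rfl, le_refl 0⟩
    · -- each normalized element is `single 1 (-1)`
      have key : ∀ n, ‖u n - 0‖⁻¹ • (u n - 0) = EuclideanSpace.single 1 (-1 : ℝ) := by
        intro n
        obtain ⟨hI, hne⟩ := hmem n
        rw [idset_eq] at hI
        obtain ⟨h0, h1l, h1u⟩ := hI
        have hlt : u n 1 < 0 := by
          rcases lt_or_eq_of_le h1u with h | h
          · exact h
          · exact absurd (ext2 (u n) 0 h0 h) hne
        have hu : u n = EuclideanSpace.single 1 (u n 1) := by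
          apply ext2 <;> simp [EuclideanSpace.single_apply, h0]
        rw [sub_zero, hu, EuclideanSpace.norm_single, Real.norm_eq_abs, abs_of_neg hlt]
        apply ext2 <;> simp [EuclideanSpace.single_apply]
        field_simp
        rw [div_self hlt.ne]
      have hconst : Tendsto (fun n => ‖u n - 0‖⁻¹ • (u n - 0)) atTop
          (𝓝 (EuclideanSpace.single 1 (-1 : ℝ))) := by
        simp only [key]; exact tendsto_const_nhds
      have heq : ‖t‖⁻¹ • t = EuclideanSpace.single 1 (-1 : ℝ) :=
        tendsto_nhds_unique hdir hconst
      have htne : t ≠ 0 := by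
        intro h
        rw [h] at heq
        have := congrArg (fun v : E2 => v 1) heq
        simp [EuclideanSpace.single_apply] at this
      have hnorm : (0:ℝ) < ‖t‖ := norm_pos_iff.mpr htne
      have h0 : ‖t‖⁻¹ * t 0 = 0 := by
        have := congrArg (fun v : E2 => v 0) heq
        simpa [EuclideanSpace.single_apply] using this
      have h1 : ‖t‖⁻¹ * t 1 = -1 := by
        have := congrArg (fun v : E2 => v 1) heq
        simpa [EuclideanSpace.single_apply] using this
      constructor
      · have hinv : ‖t‖⁻¹ ≠ 0 := by positivity
        exact (mul_eq_zero.mp h0).resolve_left hinv |>.symm ▸ rfl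
      · nlinarith [inv_pos.mpr hnorm]
  · rintro ⟨h0, h1⟩
    rcases eq_or_lt_of_le h1 with h | h
    · left
      exact ext2 t 0 h0 h
    · right
      refine ⟨fun n => EuclideanSpace.single 1 (-((n:ℝ)+1)⁻¹), ?_, ?_, ?_⟩
      · intro n
        have hpos : (0:ℝ) < ((n:ℝ)+1)⁻¹ := by positivity
        have hle : ((n:ℝ)+1)⁻¹ ≤ 1 := by
          rw [inv_le_one_iff₀]; right; linarith [Nat.cast_nonneg (α := ℝ) n]
        constructor
        · rw [idset_eq]
          refine ⟨by simp [EuclideanSpace.single_apply], ?_, ?_⟩ <;>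
            simp [EuclideanSpace.single_apply] <;> linarith
        · intro hz
          have := congrArg (fun v : E2 => v 1) hz
          simp [EuclideanSpace.single_apply] at this
          linarith
      · have ha : Tendsto (fun n : ℕ => -((n:ℝ)+1)⁻¹) atTop (𝓝 0) := by
          have := tendsto_one_div_add_atTop_nhds_zero_nat (𝕜 := ℝ)
          simp only [one_div] at this
          simpa using this.neg
        have : Tendsto (fun n : ℕ => (-((n:ℝ)+1)⁻¹) • (EuclideanSpace.single 1 (1:ℝ) : E2))
            atTop (𝓝 ((0:ℝ) • (EuclideanSpace.single 1 (1:ℝ) : E2))) :=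
          ha.smul_const _
        simp only [zero_smul] at this
        convert this using 2 with n
        apply ext2 <;> simp [EuclideanSpace.single_apply]
      · have key : ∀ n : ℕ, ‖(EuclideanSpace.single 1 (-((n:ℝ)+1)⁻¹) : E2) - 0‖⁻¹ •
            ((EuclideanSpace.single 1 (-((n:ℝ)+1)⁻¹) : E2) - 0)
            = EuclideanSpace.single 1 (-1 : ℝ) := by
          intro n
          have hpos : (0:ℝ) < ((n:ℝ)+1)⁻¹ := by positivity
          rw [sub_zero, EuclideanSpace.norm_single, Real.norm_eq_abs, abs_of_neg (by linarith : -((n:ℝ)+1)⁻¹ < 0)]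
          apply ext2 <;> simp [EuclideanSpace.single_apply]
          field_simp
        have htgt : ‖t‖⁻¹ • t = EuclideanSpace.single 1 (-1 : ℝ) := by
          have hu : t = EuclideanSpace.single 1 (t 1) := by
            apply ext2 <;> simp [EuclideanSpace.single_apply, h0]
          rw [hu, EuclideanSpace.norm_single, Real.norm_eq_abs, abs_of_neg h]
          apply ext2 <;> simp [EuclideanSpace.single_apply]
          field_simp
          rw [div_self h.ne]
        simp only [key, htgt]
        exact tendsto_const_nhds

lemma a7 : ∀ t ∈ lcone gEx17 0, ⟪pvec, t⟫ ≤ -(1 / Real.sqrt 2) * ‖t‖ := by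
  intro t ht
  rw [lcone_eq] at ht
  simp only [Set.mem_setOf_eq] at ht
  have hip : ⟪pvec, t⟫ = t 1 := by
    simp [pvec, EuclideanSpace.inner_single_left]
  rw [hip]
  have hnorm : ‖t‖ = Real.sqrt (t 0 ^ 2 + t 1 ^ 2) := by
    rw [EuclideanSpace.norm_eq, Fin.sum_univ_two]
    simp [Real.norm_eq_abs, sq_abs]
  have habs : |t 0| ≤ -t 1 := by linarith [neg_abs_le (t 0), abs_nonneg (t 0)]
  have hsq : t 0 ^ 2 ≤ t 1 ^ 2 := by nlinarith [abs_nonneg (t 0), sq_abs (t 0)]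
  have ht1 : t 1 ≤ 0 := by linarith [abs_nonneg (t 0)]
  have hle : Real.sqrt (t 0 ^ 2 + t 1 ^ 2) ≤ Real.sqrt 2 * (-t 1) := by
    have : Real.sqrt (t 0 ^ 2 + t 1 ^ 2) ≤ Real.sqrt (2 * t 1 ^ 2) :=
      Real.sqrt_le_sqrt (by nlinarith)
    calc Real.sqrt (t 0 ^ 2 + t 1 ^ 2) ≤ Real.sqrt (2 * t 1 ^ 2) := this
      _ = Real.sqrt 2 * Real.sqrt (t 1 ^ 2) := Real.sqrt_mul (by norm_num) _
      _ = Real.sqrt 2 * (-t 1) := by rw [Real.sqrt_sq_eq_abs, abs_of_nonpos ht1]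
  have hs2 : Real.sqrt 2 * Real.sqrt 2 = 2 := Real.mul_self_sqrt (by norm_num)
  have hspos : (0:ℝ) < Real.sqrt 2 := by positivity
  rw [hnorm]
  rw [neg_mul, le_neg, div_mul_eq_mul_div, one_mul, div_le_iff₀ hspos]
  nlinarith [Real.sqrt_nonneg (t 0 ^ 2 + t 1 ^ 2)]

/-- Fourth counterexample. -/
theorem example17_assumption7'_without_ACQ :
    idSetEx17 = {θ : E2 | θ 0 = 0 ∧ -1 ≤ θ 1 ∧ θ 1 ≤ 0} ∧
    suppSet idSetEx17 pvec = {0} ∧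
    lcone gEx17 0 = {t : E2 | t 1 ≤ -|t 0|} ∧
    tcone idSetEx17 0 = {t : E2 | t 0 = 0 ∧ t 1 ≤ 0} ∧
    (∀ t ∈ lcone gEx17 0, ⟪pvec, t⟫ ≤ -(1 / Real.sqrt 2) * ‖t‖) ∧
    lcone gEx17 0 ≠ tcone idSetEx17 0 := by
  refine ⟨idset_eq, supp_eq, lcone_eq, tcone_eq, a7, ?_⟩
  rw [lcone_eq, tcone_eq]
  intro h
  set w : E2 := EuclideanSpace.single 0 1 + EuclideanSpace.single 1 (-1) with hw
  have hw0 : w 0 = 1 := by simp [hw, EuclideanSpace.single_apply]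
  have hw1 : w 1 = -1 := by simp [hw, EuclideanSpace.single_apply]
  have h1 : w ∈ {t : E2 | t 1 ≤ -|t 0|} := by
    simp only [Set.mem_setOf_eq, hw0, hw1]; norm_num
  rw [h] at h1
  simp only [Set.mem_setOf_eq, hw0] at h1
  exact one_ne_zero h1.1
end
end
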